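/- Let k ≥ 1, let G be a k-edge-connected graph with at least 2 vertices, let u be a vertex of G, and let G' be the graph obtained from G by clique expansion with center u. Then G' is k-edge-connected. -/

import Mathlib

/-- A finite multigraph; loops and parallel edges are allowed.  Every edge `e`
joins the two (possibly equal) vertices `fst e` and `snd e`; the functions
`fst`/`snd` also fix a reference orientation of each edge. -/
structure Multigraph where
  V : Type
  E : Type
  [fintypeV : Fintype V]
  [decEqV : DecidableEq V]
  [fintypeE : Fintype E]
  [decEqE : DecidableEq E]
  fst : E → V
  snd : E → V

attribute [instance] Multigraph.fintypeV Multigraph.decEqV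
attribute [instance] Multigraph.fintypeE Multigraph.decEqE

namespace Multigraph

variable (G : Multigraph)

/-- The edge `e` is incident with the vertex `v`. -/
def Inc (e : G.E) (v : G.V) : Prop :=
  G.fst e = v ∨ G.snd e = v

/-- The edge `e` joins the vertices `x` and `y` (in either order). -/
def Joins (e : G.E) (x y : G.V) : Prop :=
  (G.fst e = x ∧ G.snd e = y) ∨ (G.fst e = y ∧ G.snd e = x)

/-- The degree of a vertex; a loop contributes `2`. -/
def degree (v : G.V) : ℕ :=
  (Finset.univ.filter fun e => G.fst e = v).card +
    (Finset.univ.filter fun e => G.snd e = v).card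

/-- The set of edges with exactly one endpoint in the vertex set `A`. -/
def cut (A : Finset G.V) : Finset G.E :=
  Finset.univ.filter fun e =>
    (G.fst e ∈ A ∧ G.snd e ∉ A) ∨ (G.fst e ∉ A ∧ G.snd e ∈ A)

/-- A multigraph is `k`-edge-connected if it has at least two vertices and
every edge cut has at least `k` edges. -/
def EdgeConnected (k : ℕ) : Prop :=
  2 ≤ Fintype.card G.V ∧
    ∀ A : Finset G.V, A.Nonempty → A ≠ Finset.univ → k ≤ (G.cut A).card

end Multigraph

namespace Multigraph

variable (G : Multigraph)

/-- The endpoint of `e` other than `u` (equal to `u` itself for a loop at `u`). -/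
def otherEnd (e : G.E) (u : G.V) : G.V :=
  if G.fst e = u then G.snd e else G.fst e

theorem otherEnd_ne {G : Multigraph} {e : G.E} {u : G.V}
    (_h1 : G.Inc e u) (h2 : ¬(G.fst e = u ∧ G.snd e = u)) :
    G.otherEnd e u ≠ u := by
  unfold otherEnd
  by_cases hf : G.fst e = u
  · simp only [hf, if_true]
    exact fun hs => h2 ⟨hf, hs⟩
  · simp only [hf, if_false]
    exact hf

instance (e : G.E) (v : G.V) : Decidable (G.Inc e v) :=
  inferInstanceAs (Decidable (G.fst e = v ∨ G.snd e = v))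

/-- The clique expansion of `G` with center `u`: delete all loops at `u`,
subdivide every remaining edge incident with `u` (the set `X` of new
subdivision vertices is indexed by these edges), add all edges of a complete
graph on `X`, and delete `u`.  (The auxiliary enumeration `ord` of `X` is
used only to index each clique edge exactly once.) -/
noncomputable def cliqueExpansion (u : G.V) : Multigraph :=
  let X := {e : G.E // G.Inc e u ∧ ¬(G.fst e = u ∧ G.snd e = u)}
  let ord : X → ℕ := fun x => (Fintype.equivFin X x : ℕ)
  { V := {w : G.V // w ≠ u} ⊕ X
    E := {e : G.E // ¬G.Inc e u} ⊕ X ⊕ {p : X × X // ord p.1 < ord p.2}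
    fintypeV := Fintype.ofFinite _
    decEqV := Classical.decEq _
    fintypeE := Fintype.ofFinite _
    decEqE := Classical.decEq _
    fst := Sum.elim
        (fun e => Sum.inl ⟨G.fst e.val, fun h => e.prop (Or.inl h)⟩)
        (Sum.elim (fun x => Sum.inr x) fun p => Sum.inr p.val.1)
    snd := Sum.elim
        (fun e => Sum.inl ⟨G.snd e.val, fun h => e.prop (Or.inr h)⟩)
        (Sum.elim
          (fun x => Sum.inl ⟨G.otherEnd x.val u, otherEnd_ne x.prop.1 x.prop.2⟩)
          fun p => Sum.inr p.val.2) }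

end Multigraph

/-!
Let `A` be a vertex set of the clique expansion `G'` that contains an original vertex and misses
a subdivision vertex `y`, and let `B` be the set of original vertices in `A`; then `B` is a proper
nonempty subset of `V(G)`, as `u ∉ B`. Each edge of `G` leaving `B` yields its own edge of `G'`
leaving `A`: an edge avoiding `u` itself, and a non-loop edge `x` at `u` its spoke if `x ∉ A`
and the clique edge `xy` otherwise (loops at `u` never leave `B`). Hence `|∂A| ≥ |∂B| ≥ k`.
Every proper nonempty vertex set of `G'` or its complement is of this form, and complementary
sets have the same cut.
-/

lemma Sum.exists_inl_mem_inr_notMem_or {α β : Type*} [Nonempty α] [Nonempty β]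
    {s : Set (α ⊕ β)} (hs : s.Nonempty) (hs' : s ≠ Set.univ) :
    (∃ a b, inl a ∈ s ∧ inr b ∉ s) ∨ (∃ a b, inl a ∉ s ∧ inr b ∈ s) := by
  obtain ⟨a₀⟩ := ‹Nonempty α›
  obtain ⟨b₀⟩ := ‹Nonempty β›
  obtain ⟨x, hx⟩ := hs
  obtain ⟨z, hz⟩ := (Set.ne_univ_iff_exists_notMem s).mp hs'
  by_cases ha₀ : inl a₀ ∈ s <;> by_cases hb₀ : inr b₀ ∈ s
  · rcases z with a | b
    · exact Or.inr ⟨a, b₀, hz, hb₀⟩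
    · exact Or.inl ⟨a₀, b, ha₀, hz⟩
  · exact Or.inl ⟨a₀, b₀, ha₀, hb₀⟩
  · exact Or.inr ⟨a₀, b₀, ha₀, hb₀⟩
  · rcases x with a | b
    · exact Or.inl ⟨a, b₀, hx, hb₀⟩
    · exact Or.inr ⟨a₀, b, ha₀, hx⟩

namespace Multigraph

variable {G : Multigraph}

lemma mem_cut {A : Finset G.V} {e : G.E} :
    e ∈ G.cut A ↔ (G.fst e ∈ A ∧ G.snd e ∉ A) ∨ (G.fst e ∉ A ∧ G.snd e ∈ A) := by
  simp [cut]

lemma cut_compl (A : Finset G.V) : G.cut Aᶜ = G.cut A := by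
  ext e
  simp only [mem_cut, Finset.mem_compl]
  tauto

lemma otherEnd_mem_of_mem_cut {u : G.V} {B : Finset G.V} {e : G.E}
    (hinc : G.Inc e u) (hu : u ∉ B) (he : e ∈ G.cut B) : G.otherEnd e u ∈ B := by
  unfold otherEnd
  split_ifs with hf
  · rw [mem_cut, hf] at he; tauto
  · rw [mem_cut, hinc.resolve_left hf] at he; tauto

lemma not_isLoop_of_mem_cut {u : G.V} {B : Finset G.V} {e : G.E} (hu : u ∉ B)
    (he : e ∈ G.cut B) : ¬(G.fst e = u ∧ G.snd e = u) := by
  rintro ⟨hf, hs⟩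
  rw [mem_cut, hf, hs] at he
  tauto

variable (G) in
/-- The set `X` of subdivision vertices of the clique expansion at `u`. -/
abbrev Subdiv (u : G.V) : Type := {e : G.E // G.Inc e u ∧ ¬(G.fst e = u ∧ G.snd e = u)}

variable {u : G.V}

lemma nonempty_subdiv {k : ℕ} (hk : 1 ≤ k) (hG : G.EdgeConnected k) :
    Nonempty (G.Subdiv u) := by
  have hne : ({u} : Finset G.V) ≠ Finset.univ := by
    obtain ⟨v, hv⟩ := Fintype.exists_ne_of_one_lt_card hG.1 u
    exact fun h => hv (Finset.mem_singleton.mp (h ▸ Finset.mem_univ v))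
  obtain ⟨e, he⟩ := Finset.card_pos.mp (hk.trans (hG.2 {u} (Finset.singleton_nonempty u) hne))
  have hinc : G.Inc e u := by
    simp only [mem_cut, Finset.mem_singleton] at he
    unfold Inc
    tauto
  rw [← cut_compl] at he
  exact ⟨⟨e, hinc, not_isLoop_of_mem_cut (by simp) he⟩⟩

def baseVertices (A : Finset (G.cliqueExpansion u).V) : Finset G.V :=
  A.toLeft.map (Function.Embedding.subtype _)

lemma mem_baseVertices {A : Finset (G.cliqueExpansion u).V} {w : G.V} (hw : w ≠ u) :
    w ∈ baseVertices A ↔ (Sum.inl ⟨w, hw⟩ : (G.cliqueExpansion u).V) ∈ A := by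
  simp only [baseVertices, Finset.mem_map, Function.Embedding.coe_subtype]
  constructor
  · rintro ⟨w, hwA, rfl⟩
    exact Finset.mem_toLeft.mp hwA
  · exact fun h => ⟨⟨w, hw⟩, Finset.mem_toLeft.mpr h, rfl⟩

lemma center_notMem_baseVertices (A : Finset (G.cliqueExpansion u).V) :
    u ∉ baseVertices A := by
  simp [baseVertices]

open scoped Classical in
noncomputable def baseEdge (A : Finset (G.cliqueExpansion u).V) :
    (G.cliqueExpansion u).E → G.E :=
  Sum.elim Subtype.val <| Sum.elim Subtype.val fun p =>
    if (Sum.inr p.val.1 : (G.cliqueExpansion u).V) ∈ A then p.val.1.val else p.val.2.val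

lemma exists_cliqueEdge_mem_cut {A : Finset (G.cliqueExpansion u).V} {x y : G.Subdiv u}
    (hx : (Sum.inr x : (G.cliqueExpansion u).V) ∈ A)
    (hy : (Sum.inr y : (G.cliqueExpansion u).V) ∉ A) :
    ∃ e ∈ (G.cliqueExpansion u).cut A, baseEdge A e = x.val := by
  -- the clique edge on `{x, y}` is indexed by the pair ordered along `Fintype.equivFin`
  rcases lt_trichotomy (Fintype.equivFin (G.Subdiv u) x : ℕ) (Fintype.equivFin _ y) with
    hlt | heq | hgt
  · exact ⟨Sum.inr (Sum.inr ⟨(x, y), hlt⟩), mem_cut.mpr (Or.inl ⟨hx, hy⟩), if_pos hx⟩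
  · exact absurd hx ((Fintype.equivFin _).injective (Fin.ext heq) ▸ hy)
  · exact ⟨Sum.inr (Sum.inr ⟨(y, x), hgt⟩), mem_cut.mpr (Or.inr ⟨hy, hx⟩), if_neg hy⟩

lemma cut_baseVertices_subset_image {A : Finset (G.cliqueExpansion u).V} {y : G.Subdiv u}
    (hy : (Sum.inr y : (G.cliqueExpansion u).V) ∉ A) :
    G.cut (baseVertices A) ⊆ ((G.cliqueExpansion u).cut A).image (baseEdge A) := by
  intro e he
  rw [Finset.mem_image]
  by_cases hinc : G.Inc e u
  · let x : G.Subdiv u := ⟨e, hinc, not_isLoop_of_mem_cut (center_notMem_baseVertices A) he⟩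
    by_cases hx : (Sum.inr x : (G.cliqueExpansion u).V) ∈ A
    · exact exists_cliqueEdge_mem_cut hx hy
    · have hend := otherEnd_mem_of_mem_cut hinc (center_notMem_baseVertices A) he
      exact ⟨Sum.inr (Sum.inl x), mem_cut.mpr (Or.inr ⟨hx, (mem_baseVertices _).mp hend⟩), rfl⟩
  · refine ⟨Sum.inl ⟨e, hinc⟩, ?_, rfl⟩
    have hfst : G.fst e ≠ u := fun h => hinc (Or.inl h)
    have hsnd : G.snd e ≠ u := fun h => hinc (Or.inr h)
    rw [mem_cut, mem_baseVertices hfst, mem_baseVertices hsnd] at he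
    exact mem_cut.mpr he

lemma le_card_cut_cliqueExpansion {k : ℕ} (hG : G.EdgeConnected k)
    {A : Finset (G.cliqueExpansion u).V} {w : {w : G.V // w ≠ u}}
    (hw : (Sum.inl w : (G.cliqueExpansion u).V) ∈ A) {y : G.Subdiv u}
    (hy : (Sum.inr y : (G.cliqueExpansion u).V) ∉ A) :
    k ≤ ((G.cliqueExpansion u).cut A).card :=
  calc k ≤ (G.cut (baseVertices A)).card :=
        hG.2 _ ⟨w, (mem_baseVertices w.prop).mpr hw⟩
          fun h => center_notMem_baseVertices A (h ▸ Finset.mem_univ u)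
    _ ≤ (((G.cliqueExpansion u).cut A).image (baseEdge A)).card :=
        Finset.card_le_card (cut_baseVertices_subset_image hy)
    _ ≤ ((G.cliqueExpansion u).cut A).card := Finset.card_image_le

end Multigraph

open Multigraph in
theorem stmt14_general (k : ℕ) (hk : 1 ≤ k) (G : Multigraph) (u : G.V)
    (hG : G.EdgeConnected k) :
    (G.cliqueExpansion u).EdgeConnected k := by
  have hX : Nonempty (G.Subdiv u) := nonempty_subdiv hk hG
  obtain ⟨v, hv⟩ := Fintype.exists_ne_of_one_lt_card hG.1 u
  have : Nonempty {w // w ≠ u} := ⟨⟨v, hv⟩⟩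
  refine ⟨Fintype.one_lt_card_iff.mpr ⟨Sum.inl ⟨v, hv⟩, Sum.inr hX.some, Sum.inl_ne_inr⟩,
    fun A hA hAuniv => ?_⟩
  rcases Sum.exists_inl_mem_inr_notMem_or (s := (A : Set (G.cliqueExpansion u).V)) hA
    (Finset.coe_eq_univ.not.mpr hAuniv) with
    ⟨w, y, hw, hy⟩ | ⟨w, y, hw, hy⟩
  · exact le_card_cut_cliqueExpansion hG hw hy
  · rw [← cut_compl]
    exact le_card_cut_cliqueExpansion hG (Finset.mem_compl (α := (G.cliqueExpansion u).V).mpr hw)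
      (Finset.mem_compl (α := (G.cliqueExpansion u).V).not.mpr (not_not.mpr hy))

/-- Let `k ≥ 1`, let `G` be a `k`-edge-connected graph with
at least two vertices, and let `u` be a vertex of `G`.  Then the clique
expansion of `G` with center `u` is again `k`-edge-connected. -/
theorem stmt14 (k : ℕ) (hk : 1 ≤ k) (G : Multigraph) (u : G.V)
    (hG : G.EdgeConnected k) (hV : 2 ≤ Fintype.card G.V) :
    (G.cliqueExpansion u).EdgeConnected k :=
  stmt14_general k hk G u hG
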